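/- arXiv:2402.07695 — 2 statements merged into one kernel-verified Lean document; each statement's English description precedes it below -/
import Mathlib

section
/- Let m ∈ M₀ and σ ∈ S₀ satisfy σ ↝ m. Then U(m) < U(σ), and σ belongs to the topological boundary of the connected component of {x : U(x) < U(σ)} that contains m. -/
open Set Filter Metric
open scoped RealInnerProductSpace

noncomputable section

/-- Euclidean space `ℝ^d`. -/
abbrev Eucl (d : ℕ) : Type := EuclideanSpace ℝ (Fin d)

/-- The communication height `Θ(x, y)` between two points. -/
def commHeight {d : ℕ} (U : Eucl d → ℝ) (x y : Eucl d) : ℝ :=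
  ⨅ γ : Path x y, ⨆ t : unitInterval, U (γ t)

/-- The communication height `Θ(A, B)` between two sets, `+∞` if one is empty. -/
def commHeightSet {d : ℕ} (U : Eucl d → ℝ) (A B : Set (Eucl d)) : EReal :=
  ⨅ x ∈ A, ⨅ y ∈ B, (commHeight U x y : EReal)

/-- `M̃`: the local minima of `U` outside `M` of height at most `c = U(M)`. -/
def tildeSet {d : ℕ} (U : Eucl d → ℝ) (M : Set (Eucl d)) (c : ℝ) : Set (Eucl d) :=
  {m' | IsLocalMin U m' ∧ m' ∉ M ∧ U m' ≤ c}

/-- `Ξ(M) = Θ(M, M̃) − U(M) ∈ (0, ∞]`. -/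
def XiSet {d : ℕ} (U : Eucl d → ℝ) (M : Set (Eucl d)) (c : ℝ) : EReal :=
  commHeightSet U M (tildeSet U M c) - (c : EReal)

/-- `M` (simple, common value `c`) is bound. -/
def IsBound {d : ℕ} (U : Eucl d → ℝ) (M : Set (Eucl d)) (c : ℝ) : Prop :=
  (∃ m, M = {m}) ∨
    ∀ m ∈ M, ∀ m' ∈ M, (commHeight U m m' : EReal) < commHeightSet U M (tildeSet U M c)

/-- `A` is a connected component of `S`. -/
def IsCompOf {d : ℕ} (S A : Set (Eucl d)) : Prop :=
  ∃ x ∈ S, A = connectedComponentIn S x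

/-- The Hessian matrix of `U` at `x`. -/
def hessMat {d : ℕ} (U : Eucl d → ℝ) (x : Eucl d) : Matrix (Fin d) (Fin d) ℝ :=
  Matrix.of fun i j =>
    iteratedFDeriv ℝ 2 U x ![EuclideanSpace.single i (1 : ℝ), EuclideanSpace.single j (1 : ℝ)]

/-- `σ` is a saddle point of `U`. -/
def IsSaddle {d : ℕ} (U : Eucl d → ℝ) (σ : Eucl d) : Prop :=
  gradient U σ = 0 ∧
    ∃ hH : (hessMat U σ).IsHermitian,
      IsUnit (hessMat U σ).det ∧ ∃! i, hH.eigenvalues i < 0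

/-- `x ↷ y` : heteroclinic orbit of `ẋ = b(x)` from `x` to `y`. -/
def Hetero {d : ℕ} (b : Eucl d → Eucl d) (x y : Eucl d) : Prop :=
  ∃ φ : ℝ → Eucl d,
    (∀ t, HasDerivAt φ (b (φ t)) t) ∧
      Tendsto φ atBot (nhds x) ∧ Tendsto φ atTop (nhds y)

/-- `σ ↝ m`. -/
def ConnectsTo {d : ℕ} (U : Eucl d → ℝ) (b : Eucl d → Eucl d) (σ m : Eucl d) : Prop :=
  Hetero b σ m ∨
    ∃ (k : ℕ) (_ : 0 < k) (σs : Fin k → Eucl d) (ms : Fin (k + 1) → Eucl d),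
      (∀ i, IsSaddle U (σs i)) ∧ (∀ i, U (σs i) < U σ) ∧
        (∀ i : Fin k, IsLocalMin U (ms i.castSucc)) ∧
        ms (Fin.last k) = m ∧ Hetero b σ (ms 0) ∧
        ∀ i : Fin k, Hetero b (σs i) (ms i.castSucc) ∧ Hetero b (σs i) (ms i.succ)

/-- `σ ↝ M`. -/
def ConnectsToSet {d : ℕ} (U : Eucl d → ℝ) (b : Eucl d → Eucl d) (σ : Eucl d)
    (M : Set (Eucl d)) : Prop :=
  ∃ m ∈ M, ConnectsTo U b σ m

/-- `σ ↷ M`. -/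
def HeteroToSet {d : ℕ} (b : Eucl d → Eucl d) (σ : Eucl d) (M : Set (Eucl d)) : Prop :=
  ∃ m ∈ M, Hetero b σ m

/-- `M →_σ M'`. -/
def AdjacentVia {d : ℕ} (U : Eucl d → ℝ) (b : Eucl d → Eucl d) (M M' : Set (Eucl d))
    (c : ℝ) (σ : Eucl d) : Prop :=
  IsSaddle U σ ∧ ConnectsToSet U b σ M ∧ HeteroToSet b σ M' ∧
    (U σ : EReal) = commHeightSet U M (tildeSet U M c) ∧
    (U σ : EReal) = commHeightSet U M M'

/-- Unstable-manifold property. -/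
def UnstableManifoldProperty {d : ℕ} (U : Eucl d → ℝ) (b : Eucl d → Eucl d) : Prop :=
  ∀ σ : Eucl d, IsSaddle U σ →
    ∃ r' > (0 : ℝ), ∃ Ap Am : Set (Eucl d),
      Ap ≠ Am ∧
      IsCompOf (ball σ r' ∩ {x | U x < U σ}) Ap ∧
      IsCompOf (ball σ r' ∩ {x | U x < U σ}) Am ∧
      (∀ C, IsCompOf (ball σ r' ∩ {x | U x < U σ}) C → C = Ap ∨ C = Am) ∧
      ∃ mp mm : Eucl d, IsLocalMin U mp ∧ IsLocalMin U mm ∧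
        ∃ tp tm : ℝ, ∃ φp φm : ℝ → Eucl d,
          (∀ t, HasDerivAt φp (b (φp t)) t) ∧ (∀ t, HasDerivAt φm (b (φm t)) t) ∧
          Tendsto φp atBot (nhds σ) ∧ Tendsto φp atTop (nhds mp) ∧
          Tendsto φm atBot (nhds σ) ∧ Tendsto φm atTop (nhds mm) ∧
          φp '' Iic tp ⊆ Ap ∧ φm '' Iic tm ⊆ Am

open scoped Topology

lemma fderiv_eq_inner_gradient {d : ℕ} {U : Eucl d → ℝ} {x : Eucl d}
    (hU : DifferentiableAt ℝ U x) (v : Eucl d) : fderiv ℝ U x v = ⟪gradient U x, v⟫ := by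
  have h1 : HasGradientAt U (gradient U x) x := hU.hasGradientAt
  have h2 : HasFDerivAt U (InnerProductSpace.toDual ℝ _ (gradient U x)) x :=
    hasGradientAt_iff_hasFDerivAt.1 h1
  rw [h2.fderiv]
  simp [InnerProductSpace.toDual_apply_apply]

lemma orbit_hasDerivAt {d : ℕ} {U : Eucl d → ℝ} (hU : ContDiff ℝ (⊤:ℕ∞) U)
    {ℓ b : Eucl d → Eucl d}
    (horth : ∀ x, (inner ℝ (gradient U x) (ℓ x) : ℝ) = 0)
    (hb : ∀ x, b x = -(gradient U x + ℓ x))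
    {φ : ℝ → Eucl d} (hφ : ∀ t, HasDerivAt φ (b (φ t)) t) (t : ℝ) :
    HasDerivAt (fun s => U (φ s)) (-‖gradient U (φ t)‖^2) t := by
  have hdiff : DifferentiableAt ℝ U (φ t) := (hU.differentiable (by norm_num)) _
  have h := (hdiff.hasFDerivAt).comp_hasDerivAt t (hφ t)
  have key : fderiv ℝ U (φ t) (b (φ t)) = -‖gradient U (φ t)‖^2 := by
    rw [fderiv_eq_inner_gradient hdiff, hb]
    rw [inner_neg_right, inner_add_right, horth, real_inner_self_eq_norm_sq]
    ring
  rw [key] at h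
  exact h

lemma no_min_of_second_deriv_neg {f f' : ℝ → ℝ} {L : ℝ}
    (hf : ∀ s, HasDerivAt f (f' s) s) (hf'0 : f' 0 = 0)
    (hf'' : HasDerivAt f' L 0) (hL : L < 0) (hmin : IsLocalMin f 0) : False := by
  have hslope : Tendsto (slope f' 0) (𝓝[≠] 0) (𝓝 L) :=
    hasDerivAt_iff_tendsto_slope.1 hf''
  have hev : ∀ᶠ s in 𝓝[≠] (0:ℝ), slope f' 0 s < 0 :=
    hslope.eventually_lt_const hL
  rw [eventually_nhdsWithin_iff, Metric.eventually_nhds_iff] at hev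
  obtain ⟨δ, hδ, hδ'⟩ := hev
  have hneg : ∀ s ∈ Ioo (0:ℝ) δ, f' s < 0 := by
    intro s hs
    have h1 : slope f' 0 s < 0 := by
      apply hδ'
      · simp only [Real.dist_eq, sub_zero]
        rw [abs_of_pos hs.1]; exact hs.2
      · simp [ne_of_gt hs.1]
    rw [slope_def_field, hf'0] at h1
    have := hs.1
    rw [div_neg_iff] at h1
    rcases h1 with h | h
    · linarith [h.2]
    · linarith [h.1]
  have hanti : StrictAntiOn f (Icc 0 δ) := by
    apply strictAntiOn_of_deriv_neg (convex_Icc 0 δ)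
    · exact (fun s _ => (hf s).differentiableAt.continuousAt.continuousWithinAt)
    · intro s hs
      rw [interior_Icc] at hs
      rw [(hf s).deriv]
      exact hneg s hs
  -- local min gives f 0 ≤ f s near 0
  obtain ⟨ε, hε, hε'⟩ := Metric.eventually_nhds_iff.1 hmin
  set t := min (δ/2) (ε/2) with ht
  have ht0 : 0 < t := by positivity
  have htδ : t ∈ Icc 0 δ := ⟨le_of_lt ht0, le_trans (min_le_left _ _) (by linarith)⟩
  have h1 : f t < f 0 := hanti (left_mem_Icc.2 (le_of_lt hδ)) htδ ht0
  have h2 : f 0 ≤ f t := by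
    apply hε'
    simp only [Real.dist_eq, sub_zero]
    rw [abs_of_pos ht0]
    exact lt_of_le_of_lt (min_le_right _ _) (by linarith)
  linarith

lemma bilin_eigen {d : ℕ} {U : Eucl d → ℝ} {σ : Eucl d}
    (hH : (hessMat U σ).IsHermitian) (i : Fin d) :
    (fderiv ℝ (fderiv ℝ U) σ) (hH.eigenvectorBasis i) (hH.eigenvectorBasis i)
      = hH.eigenvalues i := by
  set B := fderiv ℝ (fderiv ℝ U) σ with hB
  set w : Eucl d := hH.eigenvectorBasis i with hwdef
  set e : Fin d → Eucl d := fun j => EuclideanSpace.single j (1:ℝ) with he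
  have hw : w = ∑ j, w j • e j := by
    ext k
    have h0 : (∑ j, w j • e j) k = ∑ j, (w j • e j) k := by
      rw [WithLp.ofLp_sum, Finset.sum_apply]
    rw [h0]
    simp [e, EuclideanSpace.single_apply, Finset.sum_ite_eq', smul_eq_mul]
  have hHB : ∀ i' j, hessMat U σ i' j = B (e i') (e j) := by
    intro i' j
    simp only [hessMat, Matrix.of_apply, he]
    rw [iteratedFDeriv_two_apply]
    simp
    rfl
  have step1 : ∀ v : Eucl d, B v w = ∑ j, w j * B v (e j) := by
    intro v
    conv_lhs => rw [hw]
    rw [map_sum]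
    simp [smul_eq_mul]
  have step1' : ∀ u : Eucl d, B w u = ∑ i', w i' * B (e i') u := by
    intro u
    conv_lhs => rw [hw]
    rw [map_sum, ContinuousLinearMap.sum_apply]
    simp [smul_eq_mul]
  have hmul : (hessMat U σ).mulVec ⇑(hH.eigenvectorBasis i)
      = hH.eigenvalues i • ⇑(hH.eigenvectorBasis i) :=
    hH.mulVec_eigenvectorBasis i
  have hrow : ∀ i', ∑ j, w j * B (e i') (e j) = hH.eigenvalues i * w i' := by
    intro i'
    have h1 := congrFun hmul i'
    simp only [Matrix.mulVec, dotProduct, Pi.smul_apply, smul_eq_mul] at h1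
    calc ∑ j, w j * B (e i') (e j) = ∑ j, hessMat U σ i' j * w j := by
          apply Finset.sum_congr rfl
          intro j _
          rw [hHB, mul_comm]
      _ = hH.eigenvalues i * w i' := h1
  have hnorm : ∑ i', w i' * w i' = 1 := by
    have h1 : ‖w‖ = 1 := hH.eigenvectorBasis.orthonormal.1 i
    have h2 : (inner ℝ w w : ℝ) = 1 := by
      rw [real_inner_self_eq_norm_sq, h1]; norm_num
    rw [← h2, PiLp.inner_apply]
    simp [RCLike.inner_apply, mul_comm, sq]
  calc B w w = ∑ i', w i' * B (e i') w := step1' w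
    _ = ∑ i', w i' * (hH.eigenvalues i * w i') := by
        apply Finset.sum_congr rfl; intro i' _; rw [step1, hrow]
    _ = hH.eigenvalues i * ∑ i', w i' * w i' := by
        rw [Finset.mul_sum]; apply Finset.sum_congr rfl; intro i' _; ring
    _ = hH.eigenvalues i := by rw [hnorm, mul_one]

lemma saddle_not_isLocalMin {d : ℕ} {U : Eucl d → ℝ} (hU : ContDiff ℝ (⊤:ℕ∞) U)
    {σ : Eucl d} (hσ : IsSaddle U σ) : ¬ IsLocalMin U σ := by
  intro hmin
  obtain ⟨hgrad, hH, -, i, hi, -⟩ := hσ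
  set w : Eucl d := hH.eigenvectorBasis i with hwdef
  set B := fderiv ℝ (fderiv ℝ U) σ with hB
  have hUdiff : Differentiable ℝ U := hU.differentiable (by norm_num)
  have hfd : ContDiff ℝ (⊤:ℕ∞) (fun x => fderiv ℝ U x) := hU.fderiv_right (by norm_num)
  -- the line
  have hline : ∀ s : ℝ, HasDerivAt (fun s : ℝ => σ + s • w) w s := by
    intro s
    simpa using ((hasDerivAt_id s).smul_const w).const_add σ
  set g : ℝ → ℝ := fun s => U (σ + s • w) with hg
  set g' : ℝ → ℝ := fun s => fderiv ℝ U (σ + s • w) w with hg'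
  have hgderiv : ∀ s, HasDerivAt g (g' s) s := by
    intro s
    exact (hUdiff (σ + s • w)).hasFDerivAt.comp_hasDerivAt s (hline s)
  have hg'0 : g' 0 = 0 := by
    have : fderiv ℝ U (σ + (0:ℝ) • w) w = ⟪gradient U (σ + (0:ℝ) • w), w⟫ :=
      fderiv_eq_inner_gradient (hUdiff _) w
    simp only [g', this]
    simp [hgrad]
  have hg'' : HasDerivAt g' (B w w) 0 := by
    have h1 : HasDerivAt (fun s : ℝ => fderiv ℝ U (σ + s • w)) (B w) 0 := by
      have hσ0 : σ = σ + (0:ℝ) • w := by simp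
      have h2 := (hfd.differentiable (by norm_num) σ).hasFDerivAt
      rw [hσ0] at h2
      have h4 := h2.comp_hasDerivAt 0 (hline 0)
      simp only [zero_smul, add_zero] at h4
      exact h4
    have h3 := h1.clm_apply (hasDerivAt_const 0 w)
    simpa using h3
  have hBww : B w w = hH.eigenvalues i := bilin_eigen hH i
  have hgmin : IsLocalMin g 0 := by
    have hcont : Continuous (fun s : ℝ => σ + s • w) := by continuity
    have : IsLocalMin (U ∘ fun s : ℝ => σ + s • w) 0 := by
      refine IsLocalMin.comp_continuous ?_ hcont.continuousAt
      show IsLocalMin U (σ + (0:ℝ) • w)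
      simpa using hmin
    exact this
  exact no_min_of_second_deriv_neg hgderiv hg'0 hg'' (hBww ▸ hi) hgmin

lemma finite_preconnected_subsingleton {X : Type*} [TopologicalSpace X] [T1Space X]
    {F s : Set X} (hF : F.Finite) (hs : s ⊆ F) (hconn : IsPreconnected s) :
    s.Subsingleton := by
  intro a ha b hb
  by_contra hab
  have hv : IsClosed (F \ {a}) := (hF.diff : (F \ {a}).Finite).isClosed
  have hcover : s ⊆ {a} ∪ (F \ {a}) := by
    intro x hx
    by_cases hxa : x = a
    · exact Or.inl (by simp [hxa])
    · exact Or.inr ⟨hs hx, by simp [hxa]⟩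
  have hdisj : s ∩ (({a} : Set X) ∩ (F \ {a})) = ∅ := by
    ext x
    by_cases hxa : x = a <;> simp [hxa]
  rcases isPreconnected_iff_subset_of_disjoint_closed.1 hconn _ _ isClosed_singleton hv
      hcover hdisj with h | h
  · exact hab ((h ha).trans (h hb).symm)
  · exact (h ha).2 rfl

lemma hetero_le {d : ℕ} {U : Eucl d → ℝ} (hU : ContDiff ℝ (⊤:ℕ∞) U)
    {ℓ b : Eucl d → Eucl d}
    (horth : ∀ x, (inner ℝ (gradient U x) (ℓ x) : ℝ) = 0)
    (hb : ∀ x, b x = -(gradient U x + ℓ x))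
    {σ m : Eucl d} (hhet : Hetero b σ m) : U m ≤ U σ := by
  obtain ⟨φ, hφ, hbot, htop⟩ := hhet
  set g : ℝ → ℝ := fun t => U (φ t) with hg
  have hgd : ∀ t, HasDerivAt g (-‖gradient U (φ t)‖^2) t :=
    fun t => orbit_hasDerivAt hU horth hb hφ t
  have hanti : Antitone g := by
    apply antitone_of_deriv_nonpos (fun t => (hgd t).differentiableAt)
    intro t; rw [(hgd t).deriv]; exact neg_nonpos.2 (sq_nonneg _)
  have hgbot : Tendsto g atBot (𝓝 (U σ)) := (hU.continuous.tendsto σ).comp hbot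
  have hgtop : Tendsto g atTop (𝓝 (U m)) := (hU.continuous.tendsto m).comp htop
  have h1 : U m ≤ g 0 := le_of_tendsto hgtop (eventually_atTop.2 ⟨0, fun s hs => hanti hs⟩)
  have h2 : g 0 ≤ U σ := ge_of_tendsto hgbot (eventually_atBot.2 ⟨0, fun s hs => hanti hs⟩)
  linarith

lemma hetero_main {d : ℕ} {U : Eucl d → ℝ} (hU : ContDiff ℝ (⊤:ℕ∞) U)
    (hcritfin : {x : Eucl d | gradient U x = 0}.Finite)
    {ℓ b : Eucl d → Eucl d}
    (horth : ∀ x, (inner ℝ (gradient U x) (ℓ x) : ℝ) = 0)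
    (hb : ∀ x, b x = -(gradient U x + ℓ x))
    {σ m : Eucl d} (hσnotmin : ¬ IsLocalMin U σ) (hm : IsLocalMin U m)
    (hhet : Hetero b σ m) :
    U m < U σ ∧ σ ∈ closure (connectedComponentIn {x | U x < U σ} m) := by
  obtain ⟨φ, hφ, hbot, htop⟩ := hhet
  set g : ℝ → ℝ := fun t => U (φ t) with hg
  have hgd : ∀ t, HasDerivAt g (-‖gradient U (φ t)‖^2) t :=
    fun t => orbit_hasDerivAt hU horth hb hφ t
  have hanti : Antitone g := by
    apply antitone_of_deriv_nonpos (fun t => (hgd t).differentiableAt)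
    intro t; rw [(hgd t).deriv]; exact neg_nonpos.2 (sq_nonneg _)
  have hφcont : Continuous φ := by
    rw [continuous_iff_continuousAt]; exact fun t => (hφ t).continuousAt
  have hgc : Continuous g := hU.continuous.comp hφcont
  have hgbot : Tendsto g atBot (𝓝 (U σ)) := (hU.continuous.tendsto σ).comp hbot
  have hgtop : Tendsto g atTop (𝓝 (U m)) := (hU.continuous.tendsto m).comp htop
  have hle : ∀ t, g t ≤ U σ :=
    fun t => ge_of_tendsto hgbot (eventually_atBot.2 ⟨t, fun s hs => hanti hs⟩)
  have hmle : ∀ t, U m ≤ g t :=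
    fun t => le_of_tendsto hgtop (eventually_atTop.2 ⟨t, fun s hs => hanti hs⟩)
  have hconst : ∀ t₀ : ℝ, (∀ s ≤ t₀, g s = U σ) → ∀ s ≤ t₀, φ s = σ := by
    intro t₀ hc
    have hgrad0 : ∀ s < t₀, gradient U (φ s) = 0 := by
      intro s hs
      have hev : g =ᶠ[𝓝 s] (fun _ => U σ) := by
        filter_upwards [Iio_mem_nhds hs] with r hr
        exact hc r (le_of_lt hr)
      have h0 : HasDerivAt g 0 s := (hasDerivAt_const s (U σ)).congr_of_eventuallyEq hev
      have h1 := (hgd s).unique h0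
      have h2 : ‖gradient U (φ s)‖^2 = 0 := by linarith
      exact norm_eq_zero.mp (sq_eq_zero_iff.mp h2)
    have hsub : (φ '' Iio t₀).Subsingleton := by
      apply finite_preconnected_subsingleton hcritfin
      · rintro x ⟨s, hs, rfl⟩; exact hgrad0 s hs
      · exact isPreconnected_Iio.image φ hφcont.continuousOn
    have hne : (t₀ - 1) ∈ Iio t₀ := by simp only [mem_Iio]; linarith
    have hval : ∀ s < t₀, φ s = φ (t₀ - 1) := fun s hs => hsub ⟨s, hs, rfl⟩ ⟨_, hne, rfl⟩
    have hcσ : φ (t₀ - 1) = σ := by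
      have h1 : Tendsto φ atBot (𝓝 (φ (t₀ - 1))) := by
        apply Tendsto.congr' _ tendsto_const_nhds
        filter_upwards [Iio_mem_atBot t₀] with s hs
        exact (hval s hs).symm
      exact tendsto_nhds_unique h1 hbot
    intro s hs
    rcases eq_or_lt_of_le hs with rfl | hs'
    · have h1 : Tendsto φ (𝓝[<] s) (𝓝 (φ s)) := (hφcont.tendsto s).mono_left nhdsWithin_le_nhds
      have h2 : Tendsto φ (𝓝[<] s) (𝓝 σ) := by
        apply Tendsto.congr' _ tendsto_const_nhds
        filter_upwards [self_mem_nhdsWithin] with r hr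
        exact ((hval r hr).trans hcσ).symm
      exact tendsto_nhds_unique h1 h2
    · exact (hval s hs').trans hcσ
  have hUmle : U m ≤ U σ := le_trans (hmle 0) (hle 0)
  have hUmlt : U m < U σ := by
    rcases lt_or_eq_of_le hUmle with h | h
    · exact h
    · exfalso
      have hall : ∀ s : ℝ, g s = U σ := fun s => le_antisymm (hle s) (h ▸ hmle s)
      have hmσ : m = σ := by
        have hφσ : φ 0 = σ := hconst 0 (fun r _ => hall r) 0 le_rfl
        have hall0 : ∀ s : ℝ, φ s = σ := by
          intro s
          rcases le_or_gt s 0 with hs | hs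
          · exact hconst 0 (fun r _ => hall r) s hs
          · exact hconst s (fun r _ => hall r) s le_rfl
        have h1 : Tendsto φ atTop (𝓝 σ) := by
          apply Tendsto.congr' _ tendsto_const_nhds
          filter_upwards with s; exact (hall0 s).symm
        exact tendsto_nhds_unique htop h1
      exact hσnotmin (hmσ ▸ hm)
  refine ⟨hUmlt, ?_⟩
  by_cases hE : ∃ t, g t = U σ
  · obtain ⟨t₁, ht₁⟩ := hE
    set E : Set ℝ := {t | g t = U σ} with hEdef
    have hinit : ∀ t ∈ E, ∀ s ≤ t, s ∈ E := by
      intro t ht s hs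
      exact le_antisymm (hle s) (le_trans (le_of_eq ht.symm) (hanti hs))
    have hclosed : IsClosed E := isClosed_eq hgc continuous_const
    have hbdd : BddAbove E := by
      obtain ⟨t₂, ht₂⟩ := (hgtop.eventually_lt_const hUmlt).exists
      refine ⟨t₂, fun t ht => ?_⟩
      by_contra hlt
      push_neg at hlt
      exact absurd (hinit t ht t₂ (le_of_lt hlt)) (by simp only [hEdef, mem_setOf_eq]; linarith)
    set T := sSup E with hT
    have hTE : T ∈ E := hclosed.csSup_mem ⟨t₁, ht₁⟩ hbdd
    have hφT : ∀ s ≤ T, φ s = σ := hconst T (fun s hs => hinit T hTE s hs)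
    have hgt : ∀ t, T < t → g t < U σ := by
      intro t ht
      rcases lt_or_eq_of_le (hle t) with h | h
      · exact h
      · exact absurd (le_csSup hbdd h) (not_le.2 ht)
    set A : Set (Eucl d) := φ '' Ioi T ∪ {m} with hA
    have hAconn : IsPreconnected A := by
      apply IsPreconnected.subset_closure (isPreconnected_Ioi.image φ hφcont.continuousOn)
        subset_union_left
      apply union_subset subset_closure
      rw [singleton_subset_iff]
      exact mem_closure_of_tendsto htop (eventually_atTop.2
        ⟨T + 1, fun t ht => mem_image_of_mem φ (by simp only [mem_Ioi]; linarith)⟩)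
    have hAsub : A ⊆ {x | U x < U σ} := by
      rintro x (⟨s, hs, rfl⟩ | rfl)
      · exact hgt s hs
      · exact hUmlt
    have hsubC : A ⊆ connectedComponentIn {x | U x < U σ} m :=
      hAconn.subset_connectedComponentIn (Or.inr rfl) hAsub
    have hTtend : Tendsto φ (𝓝[>] T) (𝓝 σ) := by
      have h1 := (hφcont.tendsto T).mono_left (nhdsWithin_le_nhds (s := Ioi T))
      rwa [hφT T le_rfl] at h1
    exact mem_closure_of_tendsto hTtend (by
      filter_upwards [self_mem_nhdsWithin] with t ht
      exact hsubC (Or.inl (mem_image_of_mem φ ht)))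
  · push_neg at hE
    have hallt : ∀ t, g t < U σ := fun t => lt_of_le_of_ne (hle t) (hE t)
    set A : Set (Eucl d) := φ '' univ ∪ {m} with hA
    have hAconn : IsPreconnected A := by
      apply IsPreconnected.subset_closure (isPreconnected_univ.image φ hφcont.continuousOn)
        subset_union_left
      apply union_subset subset_closure
      rw [singleton_subset_iff]
      exact mem_closure_of_tendsto htop (Eventually.of_forall fun t =>
        mem_image_of_mem φ (mem_univ t))
    have hAsub : A ⊆ {x | U x < U σ} := by
      rintro x (⟨s, -, rfl⟩ | rfl)
      · exact hallt s
      · exact hUmlt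
    have hsubC : A ⊆ connectedComponentIn {x | U x < U σ} m :=
      hAconn.subset_connectedComponentIn (Or.inr rfl) hAsub
    exact mem_closure_of_tendsto hbot (Eventually.of_forall fun t =>
      hsubC (Or.inl (mem_image_of_mem φ (mem_univ t))))

lemma mem_frontier_of_closure {d : ℕ} {U : Eucl d → ℝ} {σ x : Eucl d}
    (h : σ ∈ closure (connectedComponentIn {y | U y < U σ} x)) :
    σ ∈ frontier (connectedComponentIn {y | U y < U σ} x) := by
  rw [frontier, mem_diff]
  exact ⟨h, fun hint =>
    absurd (connectedComponentIn_subset _ _ (interior_subset hint)) (by simp)⟩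

lemma hetero_preconn {d : ℕ} {U : Eucl d → ℝ} (hU : ContDiff ℝ (⊤:ℕ∞) U)
    {ℓ b : Eucl d → Eucl d}
    (horth : ∀ x, (inner ℝ (gradient U x) (ℓ x) : ℝ) = 0)
    (hb : ∀ x, b x = -(gradient U x + ℓ x))
    {x y : Eucl d} (hhet : Hetero b x y) :
    ∃ B : Set (Eucl d), IsPreconnected B ∧ x ∈ B ∧ y ∈ B ∧ ∀ z ∈ B, U z ≤ U x := by
  obtain ⟨φ, hφ, hbot, htop⟩ := hhet
  have hφcont : Continuous φ := by
    rw [continuous_iff_continuousAt]; exact fun t => (hφ t).continuousAt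
  set g : ℝ → ℝ := fun t => U (φ t) with hg
  have hgd : ∀ t, HasDerivAt g (-‖gradient U (φ t)‖^2) t :=
    fun t => orbit_hasDerivAt hU horth hb hφ t
  have hanti : Antitone g := by
    apply antitone_of_deriv_nonpos (fun t => (hgd t).differentiableAt)
    intro t; rw [(hgd t).deriv]; exact neg_nonpos.2 (sq_nonneg _)
  have hgbot : Tendsto g atBot (𝓝 (U x)) := (hU.continuous.tendsto x).comp hbot
  have hle : ∀ t, g t ≤ U x :=
    fun t => ge_of_tendsto hgbot (eventually_atBot.2 ⟨t, fun s hs => hanti hs⟩)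
  refine ⟨φ '' univ ∪ {x, y}, ?_, Or.inr (by simp), Or.inr (by simp), ?_⟩
  · apply IsPreconnected.subset_closure (isPreconnected_univ.image φ hφcont.continuousOn)
      subset_union_left
    apply union_subset subset_closure
    intro z hz
    rcases hz with rfl | rfl
    · exact mem_closure_of_tendsto hbot (Eventually.of_forall fun t =>
        mem_image_of_mem φ (mem_univ t))
    · exact mem_closure_of_tendsto htop (Eventually.of_forall fun t =>
        mem_image_of_mem φ (mem_univ t))
  · rintro z (⟨t, -, rfl⟩ | hz)
    · exact hle t
    · rcases hz with rfl | rfl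
      · exact le_rfl
      · exact hetero_le hU horth hb ⟨φ, hφ, hbot, htop⟩

theorem statement14 {d : ℕ} (hd : 1 ≤ d)
    (U : Eucl d → ℝ) (hU : ContDiff ℝ (⊤ : ℕ∞) U)
    (hcoer : Tendsto U (cocompact (Eucl d)) atTop)
    (hcritfin : {x : Eucl d | gradient U x = 0}.Finite)
    (hmorse : ∀ x : Eucl d, gradient U x = 0 → IsUnit (hessMat U x).det)
    (ℓ : Eucl d → Eucl d) (hℓ : ContDiff ℝ 1 ℓ)
    (horth : ∀ x, (inner ℝ (gradient U x) (ℓ x) : ℝ) = 0)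
    (b : Eucl d → Eucl d) (hb : ∀ x, b x = -(gradient U x + ℓ x))
    (m σ : Eucl d) (hm : IsLocalMin U m) (hσ : IsSaddle U σ)
    (hconn : ConnectsTo U b σ m) :
    U m < U σ ∧ σ ∈ frontier (connectedComponentIn {x | U x < U σ} m) := by
  have hσnotmin : ¬ IsLocalMin U σ := saddle_not_isLocalMin hU hσ
  rcases hconn with hhet | ⟨k, hk, σs, ms, hsad, hltσ, hminloc, hlast, hhet0, hchain⟩
  · obtain ⟨h1, h2⟩ := hetero_main hU hcritfin horth hb hσnotmin hm hhet
    exact ⟨h1, mem_frontier_of_closure h2⟩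
  · -- local min at ms 0
    have h0cast : ((⟨0, hk⟩ : Fin k).castSucc) = (0 : Fin (k+1)) := by
      apply Fin.ext; simp
    have hm0 : IsLocalMin U (ms 0) := h0cast ▸ hminloc ⟨0, hk⟩
    obtain ⟨hU0lt, hcl0⟩ := hetero_main hU hcritfin horth hb hσnotmin hm0 hhet0
    set C₀ := connectedComponentIn {x | U x < U σ} (ms 0) with hC₀
    -- U m < U σ
    set j : Fin k := ⟨k - 1, by omega⟩ with hj
    have hjsucc : j.succ = Fin.last k := by
      apply Fin.ext; simp [hj, Fin.succ, Fin.last]; omega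
    have hUm : U m < U σ := by
      have h1 : U (ms j.succ) ≤ U (σs j) := hetero_le hU horth hb (hchain j).2
      rw [hjsucc, hlast] at h1
      exact lt_of_le_of_lt h1 (hltσ j)
    refine ⟨hUm, ?_⟩
    -- chain membership
    have key : ∀ n : ℕ, ∀ hn : n < k + 1, ms ⟨n, hn⟩ ∈ C₀ := by
      intro n
      induction n with
      | zero =>
        intro hn
        have h0 : (⟨0, hn⟩ : Fin (k+1)) = 0 := rfl
        rw [h0]
        exact mem_connectedComponentIn hU0lt
      | succ n ih =>
        intro hn
        have hnk : n < k := by omega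
        set i : Fin k := ⟨n, hnk⟩ with hi
        have hprev : ms i.castSucc ∈ C₀ := ih (by omega)
        obtain ⟨B₁, hB₁conn, hσB₁, hxB₁, hB₁le⟩ :=
          hetero_preconn hU horth hb (hchain i).1
        obtain ⟨B₂, hB₂conn, hσB₂, hyB₂, hB₂le⟩ :=
          hetero_preconn hU horth hb (hchain i).2
        have hBconn : IsPreconnected (B₁ ∪ B₂) :=
          IsPreconnected.union (σs i) hσB₁ hσB₂ hB₁conn hB₂conn
        have hBsub : B₁ ∪ B₂ ⊆ {x | U x < U σ} := by
          rintro z (hz | hz)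
          · exact lt_of_le_of_lt (hB₁le z hz) (hltσ i)
          · exact lt_of_le_of_lt (hB₂le z hz) (hltσ i)
        have hsubcomp : B₁ ∪ B₂ ⊆ connectedComponentIn {x | U x < U σ} (ms i.castSucc) :=
          hBconn.subset_connectedComponentIn (Or.inl hxB₁) hBsub
        have hcompeq : C₀ = connectedComponentIn {x | U x < U σ} (ms i.castSucc) :=
          connectedComponentIn_eq hprev
        have hy : ms i.succ ∈ C₀ := by
          rw [hcompeq]
          exact hsubcomp (Or.inr hyB₂)
        have : i.succ = (⟨n + 1, hn⟩ : Fin (k+1)) := rfl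
        rwa [this] at hy
    have hmC₀ : m ∈ C₀ := by
      have := key k (by omega)
      have hlk : (⟨k, by omega⟩ : Fin (k+1)) = Fin.last k := rfl
      rwa [hlk, hlast] at this
    have hcompeq : connectedComponentIn {x | U x < U σ} m = C₀ :=
      (connectedComponentIn_eq hmC₀).symm
    rw [hcompeq]
    exact mem_frontier_of_closure hcl0

end
end

section
/- Let H₀ ∈ ℝ and let H be a connected component of {x : U(x) < H₀}. Then for every saddle point σ ∈ S₀ lying on the boundary ∂H there exists a local minimum m ∈ M₀ ∩ H with σ ↷ m. -/
open Set Filter Metric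
open scoped RealInnerProductSpace

noncomputable section

/-- A closure point of a connected component of an open set, lying in the set,
belongs to the component. -/
lemma mem_comp_of_mem_closure {d : ℕ} {S : Set (Eucl d)} (hS : IsOpen S) {x y : Eucl d}
    (hy : y ∈ closure (connectedComponentIn S x)) (hyS : y ∈ S) :
    y ∈ connectedComponentIn S x := by
  have hCopen : IsOpen (connectedComponentIn S y) := hS.connectedComponentIn
  have hyC : y ∈ connectedComponentIn S y := mem_connectedComponentIn hyS
  obtain ⟨z, hz1, hz2⟩ := mem_closure_iff.1 hy _ hCopen hyC
  have e1 := connectedComponentIn_eq hz1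
  have e2 := connectedComponentIn_eq hz2
  rw [e2, ← e1]
  exact hyC

theorem statement16 {d : ℕ} (hd : 1 ≤ d)
    (U : Eucl d → ℝ) (hU : ContDiff ℝ (⊤ : ℕ∞) U)
    (hcoer : Tendsto U (cocompact (Eucl d)) atTop)
    (hcritfin : {x : Eucl d | gradient U x = 0}.Finite)
    (hmorse : ∀ x : Eucl d, gradient U x = 0 → IsUnit (hessMat U x).det)
    (ℓ : Eucl d → Eucl d) (hℓ : ContDiff ℝ 1 ℓ)
    (horth : ∀ x, (inner ℝ (gradient U x) (ℓ x) : ℝ) = 0)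
    (b : Eucl d → Eucl d) (hb : ∀ x, b x = -(gradient U x + ℓ x))
    (hump : UnstableManifoldProperty U b)
    (H₀ : ℝ) (H : Set (Eucl d)) (hH : IsCompOf {x | U x < H₀} H) :
    ∀ σ, IsSaddle U σ → σ ∈ frontier H →
      ∃ m, IsLocalMin U m ∧ m ∈ H ∧ Hetero b σ m := by
  obtain ⟨x₀, hx₀, hHdef⟩ := hH
  have hUc : Continuous U := hU.continuous
  have hSopen : IsOpen {x : Eucl d | U x < H₀} := isOpen_lt hUc continuous_const
  have hHopen : IsOpen H := hHdef ▸ hSopen.connectedComponentIn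
  have hHsub : H ⊆ {x : Eucl d | U x < H₀} := hHdef ▸ connectedComponentIn_subset _ _
  -- H is the component of any of its points
  have hHcomp : ∀ z ∈ H, H = connectedComponentIn {x : Eucl d | U x < H₀} z := by
    intro z hz
    rw [hHdef] at hz ⊢
    exact connectedComponentIn_eq hz
  have hclos : ∀ y ∈ closure H, U y < H₀ → y ∈ H := by
    intro y hy hyU
    rw [hHdef] at hy ⊢
    exact mem_comp_of_mem_closure hSopen hy hyU
  intro σ hσ hσf
  rw [hHopen.frontier_eq] at hσf
  obtain ⟨hσcl, hσnot⟩ := hσf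
  -- U σ = H₀
  have hUσle : U σ ≤ H₀ := by
    have : closure H ⊆ {x : Eucl d | U x ≤ H₀} :=
      closure_minimal (fun x hx => show U x ≤ H₀ from le_of_lt (hHsub hx))
        (isClosed_le hUc continuous_const)
    exact this hσcl
  have hUσ : U σ = H₀ := by
    rcases lt_or_eq_of_le hUσle with h | h
    · exact absurd (hclos σ hσcl h) hσnot
    · exact h
  -- derivative of U along any orbit of b is nonpositive
  have hmono : ∀ φ : ℝ → Eucl d, (∀ t, HasDerivAt φ (b (φ t)) t) → Antitone (U ∘ φ) := by
    intro φ hφ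
    have hder : ∀ t, HasDerivAt (U ∘ φ) (inner ℝ (gradient U (φ t)) (b (φ t)) : ℝ) t := by
      intro t
      have hgrad : HasGradientAt U (gradient U (φ t)) (φ t) :=
        (hU.differentiable (by simp) (φ t)).hasGradientAt
      exact hgrad.hasFDerivAt.comp_hasDerivAt t (hφ t)
    have hle : ∀ t, (inner ℝ (gradient U (φ t)) (b (φ t)) : ℝ) ≤ 0 := by
      intro t
      rw [hb (φ t)]
      have h1 : (inner ℝ (gradient U (φ t)) (-(gradient U (φ t) + ℓ (φ t))) : ℝ)
          = -(‖gradient U (φ t)‖ ^ 2 + inner ℝ (gradient U (φ t)) (ℓ (φ t))) := by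
        rw [inner_neg_right, inner_add_right, real_inner_self_eq_norm_sq]
      rw [h1, horth (φ t), add_zero]
      simpa using sq_nonneg ‖gradient U (φ t)‖
    refine antitone_of_deriv_nonpos (fun t => (hder t).differentiableAt) fun t => ?_
    rw [(hder t).deriv]
    exact hle t
  -- apply the unstable manifold property
  obtain ⟨r', hr', Ap, Am, _, hApc, hAmc, huniq, mp, mm, hmp, hmm, tp, tm, φp, φm,
    hφp, hφm, _, hφpTop, _, hφmTop, hφpA, hφmA⟩ := hump σ hσ
  -- find a point of H in the ball
  obtain ⟨x, hxball, hxH⟩ := mem_closure_iff.1 hσcl _ isOpen_ball (mem_ball_self hr')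
  have hxS' : x ∈ ball σ r' ∩ {y : Eucl d | U y < U σ} :=
    ⟨hxball, by simpa [hUσ] using hHsub hxH⟩
  have hCcomp : IsCompOf (ball σ r' ∩ {y : Eucl d | U y < U σ})
      (connectedComponentIn (ball σ r' ∩ {y : Eucl d | U y < U σ}) x) := ⟨x, hxS', rfl⟩
  -- generic argument for either component
  have main : ∀ (A : Set (Eucl d)) (m : Eucl d) (t0 : ℝ) (φ : ℝ → Eucl d),
      IsLocalMin U m → (∀ t, HasDerivAt φ (b (φ t)) t) → Tendsto φ atBot (nhds σ) →
      Tendsto φ atTop (nhds m) → φ '' Iic t0 ⊆ A →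
      IsCompOf (ball σ r' ∩ {y : Eucl d | U y < U σ}) A →
      connectedComponentIn (ball σ r' ∩ {y : Eucl d | U y < U σ}) x = A →
      ∃ m, IsLocalMin U m ∧ m ∈ H ∧ Hetero b σ m := by
    intro A m t0 φ hm hφ hφbot hφtop hφA hAcomp hCA
    have hAsub : A ⊆ {y : Eucl d | U y < H₀} := by
      obtain ⟨w, hw, rfl⟩ := hAcomp
      intro y hy
      have := connectedComponentIn_subset _ _ hy
      simpa [hUσ] using this.2
    have hxA : x ∈ A := hCA ▸ mem_connectedComponentIn hxS'
    -- A ⊆ H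
    have hAH : A ⊆ H := by
      rw [hHcomp x hxH]
      refine IsPreconnected.subset_connectedComponentIn ?_ hxA hAsub
      rw [← hCA]
      exact isPreconnected_connectedComponentIn
    have hφcont : Continuous φ := continuous_iff_continuousAt.2 fun t => (hφ t).continuousAt
    have hφt0 : φ t0 ∈ H := hAH (hφA ⟨t0, le_refl t0, rfl⟩)
    have hanti := hmono φ hφ
    -- φ '' Ici t0 ⊆ H
    have hIci : φ '' Ici t0 ⊆ H := by
      rw [hHcomp (φ t0) hφt0]
      refine IsPreconnected.subset_connectedComponentIn
        (isPreconnected_Ici.image φ hφcont.continuousOn)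
        ⟨t0, le_refl t0, rfl⟩ ?_
      rintro y ⟨s, hs, rfl⟩
      have : U (φ s) ≤ U (φ t0) := hanti hs
      exact lt_of_le_of_lt this (hHsub hφt0)
    -- m ∈ closure H and U m < H₀
    have hmcl : m ∈ closure H := by
      refine mem_closure_of_tendsto hφtop ?_
      filter_upwards [eventually_ge_atTop t0] with s hs
      exact hIci ⟨s, hs, rfl⟩
    have hUm : U m < H₀ := by
      have hlim : Tendsto (fun s => U (φ s)) atTop (nhds (U m)) :=
        (hUc.tendsto m).comp hφtop
      have : U m ≤ U (φ t0) := by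
        refine le_of_tendsto hlim ?_
        filter_upwards [eventually_ge_atTop t0] with s hs using hanti hs
      exact lt_of_le_of_lt this (hHsub hφt0)
    exact ⟨m, hm, hclos m hmcl hUm, φ, hφ, hφbot, hφtop⟩
  rcases huniq _ hCcomp with hC | hC
  · exact main Ap mp tp φp hmp hφp (by assumption) hφpTop hφpA hApc hC
  · exact main Am mm tm φm hmm hφm (by assumption) hφmTop hφmA hAmc hC


end
end
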